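/- Let x : ℝ → (Fin n → ℝ) be a smooth positive solution of the QP system with matrices A (n×N) and B (N×n). Then the k-th Taylor coefficient of x_i at 0 is C_i(k) = x_i(0) Σ_{i₁,…,i_k ∈ Fin N} A_{i i₁}(A_{i i₂}+M_{i₁ i₂})⋯(A_{i i_k}+M_{i₁ i_k}+⋯+M_{i_{k-1} i_k}) · u_{i₁}(0) ⋯ u_{i_k}(0), where M = B·A and u_j(0) = Π_{l=1}^{n} x_l(0)^{B_{jl}}. -/

import Mathlib

open Matrix Finset

private lemma qp_filter_sum_castSucc {k : ℕ} (f : Fin (k + 1) → ℝ) (p : Fin k) :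
    ∑ q ∈ Finset.univ.filter (fun q => q < Fin.castSucc p), f q
      = ∑ q ∈ Finset.univ.filter (fun q => q < p), f (Fin.castSucc q) := by
  rw [Finset.sum_filter, Finset.sum_filter, Fin.sum_univ_castSucc]
  simp [Fin.castSucc_lt_castSucc_iff, (Fin.castSucc_lt_last p).asymm]

private lemma qp_filter_sum_last {k : ℕ} (f : Fin (k + 1) → ℝ) :
    ∑ q ∈ Finset.univ.filter (fun q => q < Fin.last k), f q
      = ∑ q : Fin k, f (Fin.castSucc q) := by
  rw [Finset.sum_filter, Fin.sum_univ_castSucc]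
  simp [Fin.castSucc_lt_last]

private lemma qp_csnoc {n N k : ℕ} (A : Matrix (Fin n) (Fin N) ℝ) (M : Matrix (Fin N) (Fin N) ℝ)
    (i : Fin n) (ι : Fin k → Fin N) (j : Fin N) :
    (∏ p : Fin (k + 1), (A i ((Fin.snoc ι j : Fin (k + 1) → Fin N) p) +
        ∑ q ∈ Finset.univ.filter (fun q => q < p), M ((Fin.snoc ι j : Fin (k + 1) → Fin N) q) ((Fin.snoc ι j : Fin (k + 1) → Fin N) p)))
      = (∏ p : Fin k, (A i (ι p) + ∑ q ∈ Finset.univ.filter (fun q => q < p), M (ι q) (ι p)))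
        * (A i j + ∑ q : Fin k, M (ι q) j) := by
  rw [Fin.prod_univ_castSucc]
  congr 1
  · refine Finset.prod_congr rfl fun p _ => ?_
    rw [Fin.snoc_castSucc, qp_filter_sum_castSucc]
    congr 1
    exact Finset.sum_congr rfl fun q _ => by rw [Fin.snoc_castSucc]
  · rw [Fin.snoc_last, qp_filter_sum_last]
    congr 1
    exact Finset.sum_congr rfl fun q _ => by rw [Fin.snoc_castSucc]

private lemma qp_psnoc {n N k : ℕ} (B : Matrix (Fin N) (Fin n) ℝ) (y : Fin n → ℝ)
    (ι : Fin k → Fin N) (j : Fin N) :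
    (∏ p : Fin (k + 1), ∏ l, y l ^ B ((Fin.snoc ι j : Fin (k + 1) → Fin N) p) l)
      = (∏ p : Fin k, ∏ l, y l ^ B (ι p) l) * ∏ l, y l ^ B j l := by
  rw [Fin.prod_univ_castSucc, Fin.snoc_last]
  congr 1
  exact Finset.prod_congr rfl fun p _ => by rw [Fin.snoc_castSucc]

private lemma qp_alg1 {k N : ℕ} (xi P : ℝ) (a u : Fin N → ℝ) (M : Fin k → Fin N → ℝ) :
    (xi * P) * ∑ j, (a j + ∑ p, M p j) * u j
      = (xi * ∑ j, a j * u j) * P + xi * ∑ p, P * ∑ m, M p m * u m := by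
  have h1 : ∀ j, (a j + ∑ p, M p j) * u j = a j * u j + ∑ p, M p j * u j :=
    fun j => by rw [add_mul, Finset.sum_mul]
  simp only [h1, Finset.sum_add_distrib, mul_add]
  congr 1
  · ring
  · rw [Finset.sum_comm, Finset.mul_sum, Finset.mul_sum]
    exact Finset.sum_congr rfl fun p _ => by ring

private lemma qp_sum_snoc {k N : ℕ} (F : (Fin (k + 1) → Fin N) → ℝ) :
    (∑ ι' : Fin (k + 1) → Fin N, F ι')
      = ∑ j : Fin N, ∑ ι : Fin k → Fin N, F ((Fin.snoc ι j : Fin (k + 1) → Fin N)) :=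
  calc (∑ ι' : Fin (k + 1) → Fin N, F ι')
      = ∑ pr : Fin N × (Fin k → Fin N), F ((Fin.snoc pr.2 pr.1 : Fin (k + 1) → Fin N)) :=
        (Fintype.sum_equiv (Fin.snocEquiv fun _ => Fin N) _ _ fun _ => rfl).symm
    _ = ∑ j : Fin N, ∑ ι : Fin k → Fin N, F ((Fin.snoc ι j : Fin (k + 1) → Fin N)) := Fintype.sum_prod_type _

set_option maxHeartbeats 1000000 in
private lemma qp_key (n N : ℕ) (A : Matrix (Fin n) (Fin N) ℝ)
    (B : Matrix (Fin N) (Fin n) ℝ) (x : ℝ → Fin n → ℝ)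
    (hpos : ∀ t i, 0 < x t i)
    (hx : ∀ t i, HasDerivAt (fun s => x s i)
      (x t i * ∑ j, A i j * ∏ l, x t l ^ B j l) t) (i : Fin n) :
    ∀ (k : ℕ) (t : ℝ),
      iteratedDeriv k (fun s => x s i) t =
        x t i * ∑ ι : Fin k → Fin N,
          (∏ p : Fin k,
            (A i (ι p) +
              ∑ q ∈ Finset.univ.filter (fun q => q < p), (B * A) (ι q) (ι p))) *
            ∏ p : Fin k, ∏ l, x t l ^ B (ι p) l := by
  -- derivative of the monomials u j
  have hu : ∀ (j : Fin N) (s : ℝ), HasDerivAt (fun r => ∏ l, x r l ^ B j l)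
      ((∏ l, x s l ^ B j l) * ∑ m, (B * A) j m * ∏ l, x s l ^ B m l) s := by
    intro j s
    have h1 : ∀ l ∈ Finset.univ, HasDerivAt (fun r => x r l ^ B j l)
        ((x s l * ∑ m, A l m * ∏ l', x s l' ^ B m l') * B j l * x s l ^ (B j l - 1)) s :=
      fun l _ => (hx s l).rpow_const (Or.inl (hpos s l).ne')
    have h2 := HasDerivAt.fun_finsetProd h1
    refine h2.congr_deriv (Eq.symm ?_)
    have hr : ∀ l : Fin n, x s l ^ (B j l - 1) * x s l = x s l ^ B j l := fun l => by
      rw [Real.rpow_sub_one (hpos s l).ne', div_mul_cancel₀ _ (hpos s l).ne']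
    have hpe : ∀ l : Fin n, (∏ l' ∈ Finset.univ.erase l, x s l' ^ B j l') * x s l ^ B j l
        = ∏ l', x s l' ^ B j l' := fun l => Finset.prod_erase_mul _ _ (Finset.mem_univ l)
    calc (∏ l, x s l ^ B j l) * ∑ m, (B * A) j m * ∏ l, x s l ^ B m l
        = ∑ l, (∏ l', x s l' ^ B j l') * (B j l * ∑ m, A l m * ∏ l', x s l' ^ B m l') := by
          simp only [Matrix.mul_apply, Finset.mul_sum, Finset.sum_mul]
          rw [Finset.sum_comm]
          exact Finset.sum_congr rfl fun l _ => Finset.sum_congr rfl fun m _ => by ring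
      _ = ∑ l ∈ Finset.univ, (∏ l' ∈ Finset.univ.erase l, x s l' ^ B j l')
            • ((x s l * ∑ m, A l m * ∏ l', x s l' ^ B m l') * B j l * x s l ^ (B j l - 1)) := by
          refine Finset.sum_congr rfl fun l _ => ?_
          rw [smul_eq_mul, ← hpe l, ← hr l]; ring
  intro k
  induction k with
  | zero =>
    intro t
    simp [iteratedDeriv_zero]
  | succ k IH =>
    intro t
    rw [iteratedDeriv_succ]
    have hfun : iteratedDeriv k (fun s => x s i) = fun s =>
        x s i * ∑ ι : Fin k → Fin N,
          (∏ p : Fin k,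
            (A i (ι p) +
              ∑ q ∈ Finset.univ.filter (fun q => q < p), (B * A) (ι q) (ι p))) *
            ∏ p : Fin k, ∏ l, x s l ^ B (ι p) l := funext fun s => IH s
    rw [hfun]
    -- derivative of each term x i * ∏_p u (ι p)
    have hprod : ∀ ι : Fin k → Fin N,
        HasDerivAt (fun s => x s i * ∏ p : Fin k, ∏ l, x s l ^ B (ι p) l)
          ((x t i * ∏ p : Fin k, ∏ l, x t l ^ B (ι p) l) *
            ∑ j, (A i j + ∑ p : Fin k, (B * A) (ι p) j) * ∏ l, x t l ^ B j l) t := by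
      intro ι
      have h1 := (hx t i).fun_mul
        (HasDerivAt.fun_finsetProd (fun p (_ : p ∈ Finset.univ) => hu (ι p) t))
      refine h1.congr_deriv (Eq.symm ?_)
      have hpe : ∀ p : Fin k,
          (∏ p' ∈ Finset.univ.erase p, ∏ l, x t l ^ B (ι p') l) * ∏ l, x t l ^ B (ι p) l
            = ∏ p', ∏ l, x t l ^ B (ι p') l :=
        fun p => Finset.prod_erase_mul _ _ (Finset.mem_univ p)
      calc (x t i * ∏ p : Fin k, ∏ l, x t l ^ B (ι p) l) *
            ∑ j, (A i j + ∑ p : Fin k, (B * A) (ι p) j) * ∏ l, x t l ^ B j l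
          = (x t i * ∑ j, A i j * ∏ l, x t l ^ B j l) * (∏ p : Fin k, ∏ l, x t l ^ B (ι p) l)
            + x t i * ∑ p : Fin k, (∏ p', ∏ l, x t l ^ B (ι p') l) *
                ∑ m, (B * A) (ι p) m * ∏ l, x t l ^ B m l :=
            qp_alg1 (x t i) _ (fun j => A i j) (fun j => ∏ l, x t l ^ B j l)
              (fun p j => (B * A) (ι p) j)
        _ = _ := by
            refine congrArg₂ (· + ·) rfl (congrArg (x t i * ·) ?_)
            refine Finset.sum_congr rfl fun p _ => ?_
            rw [smul_eq_mul, ← hpe p]; ring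
    -- derivative of the whole sum
    have hg : HasDerivAt (fun s =>
        x s i * ∑ ι : Fin k → Fin N,
          (∏ p : Fin k,
            (A i (ι p) +
              ∑ q ∈ Finset.univ.filter (fun q => q < p), (B * A) (ι q) (ι p))) *
            ∏ p : Fin k, ∏ l, x s l ^ B (ι p) l)
        (∑ ι : Fin k → Fin N,
          (∏ p : Fin k,
            (A i (ι p) +
              ∑ q ∈ Finset.univ.filter (fun q => q < p), (B * A) (ι q) (ι p))) *
          ((x t i * ∏ p : Fin k, ∏ l, x t l ^ B (ι p) l) *
            ∑ j, (A i j + ∑ p : Fin k, (B * A) (ι p) j) * ∏ l, x t l ^ B j l)) t := by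
      have h2 := HasDerivAt.fun_sum (fun ι (_ : ι ∈ Finset.univ) => (hprod ι).const_mul
        ((∏ p : Fin k,
            (A i (ι p) +
              ∑ q ∈ Finset.univ.filter (fun q => q < p), (B * A) (ι q) (ι p)))))
      have hfe : (fun s => x s i * ∑ ι : Fin k → Fin N,
          (∏ p : Fin k,
            (A i (ι p) +
              ∑ q ∈ Finset.univ.filter (fun q => q < p), (B * A) (ι q) (ι p))) *
            ∏ p : Fin k, ∏ l, x s l ^ B (ι p) l)
          = (fun s => ∑ ι : Fin k → Fin N,
          (∏ p : Fin k,
            (A i (ι p) +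
              ∑ q ∈ Finset.univ.filter (fun q => q < p), (B * A) (ι q) (ι p))) *
            (x s i * ∏ p : Fin k, ∏ l, x s l ^ B (ι p) l)) := by
        funext s
        rw [Finset.mul_sum]
        exact Finset.sum_congr rfl fun ι _ => by ring
      rw [hfe]
      exact h2
    rw [hg.deriv]
    rw [qp_sum_snoc (fun ι' : Fin (k + 1) → Fin N =>
      (∏ p : Fin (k + 1),
        (A i (ι' p) +
          ∑ q ∈ Finset.univ.filter (fun q => q < p), (B * A) (ι' q) (ι' p))) *
        ∏ p : Fin (k + 1), ∏ l, x t l ^ B (ι' p) l)]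
    calc (∑ ι : Fin k → Fin N,
          (∏ p : Fin k,
            (A i (ι p) +
              ∑ q ∈ Finset.univ.filter (fun q => q < p), (B * A) (ι q) (ι p))) *
          ((x t i * ∏ p : Fin k, ∏ l, x t l ^ B (ι p) l) *
            ∑ j, (A i j + ∑ p : Fin k, (B * A) (ι p) j) * ∏ l, x t l ^ B j l))
        = ∑ ι : Fin k → Fin N, ∑ j : Fin N, x t i *
            ((∏ p : Fin (k + 1),
              (A i ((Fin.snoc ι j : Fin (k + 1) → Fin N) p) +
                ∑ q ∈ Finset.univ.filter (fun q => q < p),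
                  (B * A) ((Fin.snoc ι j : Fin (k + 1) → Fin N) q) ((Fin.snoc ι j : Fin (k + 1) → Fin N) p))) *
              ∏ p : Fin (k + 1), ∏ l, x t l ^ B ((Fin.snoc ι j : Fin (k + 1) → Fin N) p) l) := by
          refine Finset.sum_congr rfl fun ι _ => ?_
          rw [Finset.mul_sum, Finset.mul_sum]
          refine Finset.sum_congr rfl fun j _ => ?_
          rw [qp_csnoc, qp_psnoc]
          ring
      _ = x t i * ∑ j : Fin N, ∑ ι : Fin k → Fin N,
            ((∏ p : Fin (k + 1),
              (A i ((Fin.snoc ι j : Fin (k + 1) → Fin N) p) +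
                ∑ q ∈ Finset.univ.filter (fun q => q < p),
                  (B * A) ((Fin.snoc ι j : Fin (k + 1) → Fin N) q) ((Fin.snoc ι j : Fin (k + 1) → Fin N) p))) *
              ∏ p : Fin (k + 1), ∏ l, x t l ^ B ((Fin.snoc ι j : Fin (k + 1) → Fin N) p) l) := by
          simp only [Finset.mul_sum]
          rw [Finset.sum_comm]

/-- Explicit Taylor coefficients for a smooth positive solution of a general QP system
`ẋ i = x i * ∑ j, A i j * ∏ l, x l ^ B j l`: with `M = B * A` and
`u j = ∏ l, x 0 l ^ B j l`, the `k`-th derivative of `x i` at `0` is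
`x i 0 * ∑_{i₁,…,i_k} A i i₁ (A i i₂ + M i₁ i₂) ⋯ u i₁ ⋯ u i_k`. -/
theorem qp_taylor_coeff (n N : ℕ) (A : Matrix (Fin n) (Fin N) ℝ)
    (B : Matrix (Fin N) (Fin n) ℝ) (x : ℝ → Fin n → ℝ) (hsm : ContDiff ℝ (⊤ : ℕ∞) x)
    (hpos : ∀ t i, 0 < x t i)
    (hx : ∀ t i, HasDerivAt (fun s => x s i)
      (x t i * ∑ j, A i j * ∏ l, x t l ^ B j l) t) :
    ∀ k : ℕ, 1 ≤ k → ∀ i,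
      iteratedDeriv k (fun s => x s i) 0 =
        x 0 i * ∑ ι : Fin k → Fin N,
          (∏ p : Fin k,
            (A i (ι p) +
              ∑ q ∈ Finset.univ.filter (fun q => q < p), (B * A) (ι q) (ι p))) *
            ∏ p : Fin k, ∏ l, x 0 l ^ B (ι p) l :=
  fun k _ i => qp_key n N A B x hpos hx i k 0
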